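/- For every integer n ≥ 2, one has s_n/(ε·s_{n−1}) < exp(−1/(2n) − (S − 1/72)/n² + 0.67/n³). -/

import Mathlib

/-!
The ratio `s n / (ε s (n-1))` is the rational function
`(6n-5)(6n-3)(6n-1)(n+S) / (216 n³ (n-1+S))`. The exponent on the right is negative for `n ≥ 2`,
and the Padé lower bound `(2+x)/(2-x) ≤ eˣ` for `x ≤ 0` reduces the claim to a polynomial
inequality in `n ≥ 2`.
-/

open Real Filter

/-- `S = 13591409/545140134` from the Chudnovsky series. -/
noncomputable def S : ℝ := 13591409 / 545140134

/-- `ε = 1728/640320³ = 53360⁻³`. -/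
noncomputable def eps : ℝ := 1728 / 640320 ^ 3

/-- The terms `s_k = (6k)!/((3k)!·(k!)³) · (k+S)/640320^{3k}` of the Chudnovsky series. -/
noncomputable def s (k : ℕ) : ℝ :=
  (Nat.factorial (6 * k) : ℝ) / ((Nat.factorial (3 * k) : ℝ) * (Nat.factorial k : ℝ) ^ 3)
    * ((k : ℝ) + S) / 640320 ^ (3 * k)

lemma Real.two_add_div_two_sub_le_exp {x : ℝ} (hx : x ≤ 0) : (2 + x) / (2 - x) ≤ exp x := by
  rcases le_or_gt x (-2) with hx₂ | hx₂
  · exact (div_nonpos_of_nonpos_of_nonneg (by linarith) (by linarith)).trans (exp_pos x).le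
  · have h := exp_le_two_add_div_two_sub (x := -x) (by linarith) (by linarith)
    rw [exp_neg] at h
    calc (2 + x) / (2 - x) = ((2 - x) / (2 + x))⁻¹ := (inv_div _ _).symm
      _ ≤ exp x := by
        rw [← inv_inv (exp x)]
        exact inv_anti₀ (by positivity) (by simpa [sub_eq_add_neg, add_comm] using h)

lemma S_pos : 0 < S := by norm_num [S]

lemma s_pos (k : ℕ) : 0 < s k := by
  have := S_pos
  unfold s
  positivity

lemma s_div_eps_mul_s_pred {n : ℕ} (hn : 1 ≤ n) :
    s n / (eps * s (n - 1)) =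
      (6 * n - 5) * (6 * n - 3) * (6 * n - 1) * (n + S) / (216 * n ^ 3 * (n - 1 + S)) := by
  obtain ⟨k, rfl⟩ : ∃ k, n = k + 1 := ⟨n - 1, by omega⟩
  have := S_pos
  have hs : eps * s k ≠ 0 := (mul_pos (by norm_num [eps]) (s_pos k)).ne'
  rw [Nat.add_sub_cancel, div_eq_iff hs]
  unfold s eps
  rw [show 6 * (k + 1) = 6 * k + 6 by ring, show 3 * (k + 1) = 3 * k + 3 by ring]
  simp only [Nat.factorial_succ, pow_add]
  push_cast
  rw [add_sub_cancel_right]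
  have hkS : (k : ℝ) + S ≠ 0 := by positivity
  field_simp
  ring

noncomputable def ratioExponent (x : ℝ) : ℝ := -1 / (2 * x) - (S - 1 / 72) / x ^ 2 + 0.67 / x ^ 3

lemma ratioExponent_eq {x : ℝ} (hx : x ≠ 0) :
    ratioExponent x = (-x ^ 2 / 2 - (S - 1 / 72) * x + 0.67) / x ^ 3 := by
  unfold ratioExponent
  field_simp

lemma ratioExponent_neg {x : ℝ} (hx : 2 ≤ x) : ratioExponent x < 0 := by
  rw [ratioExponent_eq (by positivity)]
  refine div_neg_of_neg_of_pos ?_ (by positivity)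
  norm_num [S]
  nlinarith

lemma ratio_lt_two_add_div_two_sub {x : ℝ} (hx : 2 ≤ x) :
    (6 * x - 5) * (6 * x - 3) * (6 * x - 1) * (x + S) / (216 * x ^ 3 * (x - 1 + S)) <
      (2 + ratioExponent x) / (2 - ratioExponent x) := by
  have hx₀ : 0 < x := by linarith
  have hS := S_pos
  have he := ratioExponent_neg hx
  have hden : 0 < x - 1 + S := by linarith
  rw [div_lt_div_iff₀ (by positivity) (by linarith), ratioExponent_eq hx₀.ne']
  field_simp
  norm_num [S]
  nlinarith [pow_nonneg (sub_nonneg.2 hx) 3, pow_nonneg (sub_nonneg.2 hx) 4]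

theorem ratio_exp_upper_bound (n : ℕ) (hn : 2 ≤ n) :
    s n / (eps * s (n - 1)) <
      Real.exp (-1 / (2 * (n : ℝ)) - (S - 1 / 72) / (n : ℝ) ^ 2 + 0.67 / (n : ℝ) ^ 3) := by
  have hx : (2 : ℝ) ≤ n := by exact_mod_cast hn
  rw [s_div_eps_mul_s_pred (by omega)]
  calc _ < (2 + ratioExponent n) / (2 - ratioExponent n) := ratio_lt_two_add_div_two_sub hx
    _ ≤ exp (ratioExponent n) := two_add_div_two_sub_le_exp (ratioExponent_neg hx).le
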